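/- For every s > 0 and every τ ∈ [0,π): the union over τ* ∈ (τ, π) of the sets ⋄^{τ*}_{τ,s} equals ⋄_{τ,s}, and for all τ < τ₀ ≤ τ₁ < π one has ⋄^{τ₀}_{τ,s} ⊆ ⋄^{τ₁}_{τ,s} ⊆ ⋄_{τ,s}. -/

import Mathlib

/-- The unit three-sphere in `ℝ⁴` (as the set of `ξ : Fin 4 → ℝ` of unit length,
indexed so that `ξ 3 = ξ⁴`). -/
def sphere3 : Set (Fin 4 → ℝ) := {ξ | (ξ 0) ^ 2 + (ξ 1) ^ 2 + (ξ 2) ^ 2 + (ξ 3) ^ 2 = 1}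

/-- `h(τ,ξ) = cos τ - ξ⁴`. -/
noncomputable def hfun (p : ℝ × (Fin 4 → ℝ)) : ℝ := Real.cos p.1 - p.2 3

/-- `ℏ(τ,ξ) = cos τ + ξ⁴`. -/
noncomputable def hbarfun (p : ℝ × (Fin 4 → ℝ)) : ℝ := Real.cos p.1 + p.2 3

/-- `𝔰(τ,ξ) = (2 sin τ + √(1 - (ξ⁴)²)) / ℏ(τ,ξ)`. -/
noncomputable def sfun (p : ℝ × (Fin 4 → ℝ)) : ℝ :=
  (2 * Real.sin p.1 + Real.sqrt (1 - (p.2 3) ^ 2)) / hbarfun p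

/-- The future half of the Minkowski diamond,
`⋄₊ = {(τ,ξ) ∈ [0,π) × S³ : h(τ,ξ) > 0}`. -/
def diamondPlus : Set (ℝ × (Fin 4 → ℝ)) :=
  {p | p.2 ∈ sphere3 ∧ 0 ≤ p.1 ∧ p.1 < Real.pi ∧ 0 < hfun p}

/-- `Δ_{<r} = {(τ,ξ) ∈ ⋄₊ : ℏ(τ,ξ) > 0 and 𝔰(τ,ξ) < r}`. -/
noncomputable def deltaLT (r : ℝ) : Set (ℝ × (Fin 4 → ℝ)) :=
  {p ∈ diamondPlus | 0 < hbarfun p ∧ sfun p < r}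

/-- `⋄ₛ = ⋄₊ \ Δ_{<s/6}`. -/
noncomputable def diamondS (s : ℝ) : Set (ℝ × (Fin 4 → ℝ)) := diamondPlus \ deltaLT (s / 6)

/-- `⋄_{τ,s} = ({τ} × S³) ∩ ⋄ₛ`. -/
noncomputable def diamondTauS (τ s : ℝ) : Set (ℝ × (Fin 4 → ℝ)) :=
  ({τ} ×ˢ (Set.univ : Set (Fin 4 → ℝ))) ∩ diamondS s

/-- `φ(τ,ξ) = √((1 - cos τ)/(1 - ξ⁴))`. -/
noncomputable def phifun (p : ℝ × (Fin 4 → ℝ)) : ℝ :=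
  Real.sqrt ((1 - Real.cos p.1) / (1 - p.2 3))

/-- `⋄^{τ*} = {(τ,ξ) ∈ ⋄₊ : 0 ≤ τ ≤ τ* and φ(τ,ξ) ≤ √((1 - cos((τ*+π)/2))/2)}`. -/
noncomputable def diamondUpTo (τstar : ℝ) : Set (ℝ × (Fin 4 → ℝ)) :=
  {p ∈ diamondPlus | 0 ≤ p.1 ∧ p.1 ≤ τstar ∧
    phifun p ≤ Real.sqrt ((1 - Real.cos ((τstar + Real.pi) / 2)) / 2)}

/-!
The bound `(1 - cos((τ* + π)/2))/2 = sin²((τ* + π)/4)` on `φ²` increases with `τ*` up to `π`,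
where it reaches `1`. On the other hand `h > 0` means `ξ⁴ < cos τ`, so `φ² < 1` on `⋄₊`; hence every
point of `⋄₊` lies in `⋄^{τ*}` for all `τ* < π` close enough to `π`.
-/

open Real Set Filter Topology

theorem diamondUpTo_mono {τ₀ τ₁ : ℝ} (h01 : τ₀ ≤ τ₁) (h1 : τ₁ ≤ π) :
    diamondUpTo τ₀ ⊆ diamondUpTo τ₁ := by
  rintro p ⟨hp, h0, hτ₀, hφ⟩
  refine ⟨hp, h0, hτ₀.trans h01, hφ.trans (sqrt_le_sqrt ?_)⟩
  have : cos ((τ₁ + π) / 2) ≤ cos ((τ₀ + π) / 2) :=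
    cos_le_cos_of_nonneg_of_le_pi (by linarith) (by linarith) (by linarith)
  linarith

theorem phifun_arg_lt_one_of_mem_diamondPlus {p : ℝ × (Fin 4 → ℝ)} (hp : p ∈ diamondPlus) :
    (1 - cos p.1) / (1 - p.2 3) < 1 := by
  have hξ : p.2 3 < cos p.1 := sub_pos.1 hp.2.2.2
  have hcos : cos p.1 ≤ 1 := cos_le_one _
  exact (div_lt_one (by linarith)).2 (by linarith)

theorem eventually_lt_half_one_sub_cos {c : ℝ} (hc : c < 1) :
    ∀ᶠ t in 𝓝[<] π, c < (1 - cos ((t + π) / 2)) / 2 := by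
  have hcont : Continuous fun t => (1 - cos ((t + π) / 2)) / 2 := by fun_prop
  have hlim : Tendsto (fun t => (1 - cos ((t + π) / 2)) / 2) (𝓝[<] π) (𝓝 1) := by
    simpa [add_self_div_two, cos_pi, one_add_one_eq_two] using
      (hcont.tendsto π).mono_left nhdsWithin_le_nhds
  exact hlim.eventually (lt_mem_nhds hc)

theorem exists_mem_diamondUpTo {p : ℝ × (Fin 4 → ℝ)} (hp : p ∈ diamondPlus) :
    ∃ τstar ∈ Ioo p.1 π, p ∈ diamondUpTo τstar := by
  obtain ⟨t, ht, hbound⟩ :=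
    (Eventually.and (Ioo_mem_nhdsLT hp.2.2.1)
      (eventually_lt_half_one_sub_cos (phifun_arg_lt_one_of_mem_diamondPlus hp))).exists
  exact ⟨t, ht, hp, hp.2.1, ht.1.le, sqrt_le_sqrt hbound.le⟩

theorem stmt9_general (s : ℝ) (τ : ℝ) :
    (⋃ τstar ∈ Set.Ioo τ Real.pi, diamondTauS τ s ∩ diamondUpTo τstar) = diamondTauS τ s ∧
    (∀ τ₀ τ₁ : ℝ, τ < τ₀ → τ₀ ≤ τ₁ → τ₁ < Real.pi →
      diamondTauS τ s ∩ diamondUpTo τ₀ ⊆ diamondTauS τ s ∩ diamondUpTo τ₁ ∧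
      diamondTauS τ s ∩ diamondUpTo τ₁ ⊆ diamondTauS τ s) := by
  refine ⟨Subset.antisymm (iUnion₂_subset fun _ _ => inter_subset_left) fun p hp => ?_,
    fun τ₀ τ₁ _ h01 h1 => ⟨inter_subset_inter_right _ (diamondUpTo_mono h01 h1.le),
      inter_subset_left⟩⟩
  obtain ⟨τstar, hτstar, hpτstar⟩ := exists_mem_diamondUpTo hp.2.1
  have hpτ : p.1 = τ := hp.1.1
  exact mem_iUnion₂.2 ⟨τstar, hpτ ▸ hτstar, hp, hpτstar⟩

/-- Lemma 5.4 (lem:Dtauexhaustion) of the paper: for every `s > 0` and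
`τ ∈ [0,π)`, the sets `⋄^{τ*}_{τ,s} = ⋄_{τ,s} ∩ ⋄^{τ*}` for `τ* ∈ (τ,π)` exhaust
`⋄_{τ,s}`, monotonically. -/
theorem stmt9 (s : ℝ) (hs : 0 < s) (τ : ℝ) (hτ : τ ∈ Set.Ico (0 : ℝ) Real.pi) :
    (⋃ τstar ∈ Set.Ioo τ Real.pi, diamondTauS τ s ∩ diamondUpTo τstar) = diamondTauS τ s ∧
    (∀ τ₀ τ₁ : ℝ, τ < τ₀ → τ₀ ≤ τ₁ → τ₁ < Real.pi →
      diamondTauS τ s ∩ diamondUpTo τ₀ ⊆ diamondTauS τ s ∩ diamondUpTo τ₁ ∧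
      diamondTauS τ s ∩ diamondUpTo τ₁ ⊆ diamondTauS τ s) :=
  stmt9_general s τ
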